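/- arXiv:2407.04889 — 2 statements merged into one kernel-verified Lean document; each statement's English description precedes it below -/
import Mathlib

section
/- Let A ∈ ℝ^{n×m} be a zero-sum game matrix (learner matrix −A) satisfying the following assumption: there exists a minmax strategy x ∈ MinMaxStrats(A), two best responses i₁ ≠ i₂ with i₁, i₂ ∈ BR(x), and an index k with x_k > 0 such that e_k^⊤A e_{i₁} ≠ e_k^⊤A e_{i₂}. Then there exists a constant C_A > 0, depending only on A, such that for every η ∈ (0,1) and every even T ∈ ℕ there exists a sequence x(0), …, x(T−1) ∈ Δ_n whose total reward against an MWU learner with step η and zero initial history satisfies R_disc(x, 0, T) ≥ T·Val(A) + C_A·η·T. -/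
/-- The value of the zero-sum game: `Val(A) = max_{x ∈ Δ_n} min_j xᵀ A e_j`. -/
noncomputable def gameValue {n m : ℕ} (A : Matrix (Fin n) (Fin m) ℝ) : ℝ :=
  sSup {v | ∃ x ∈ stdSimplex ℝ (Fin n), v = ⨅ j, ∑ k, x k * A k j}

open scoped Classical in
/-- The set of best responses of the learner (matrix `−A`) to `x`: the columns
minimizing `xᵀ A e_j`. -/
noncomputable def BRset {n m : ℕ} (A : Matrix (Fin n) (Fin m) ℝ) (x : Fin n → ℝ) :
    Finset (Fin m) :=
  Finset.univ.filter fun j => ∀ i, ∑ k, x k * A k j ≤ ∑ k, x k * A k i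

/-- The MWU learner's mixed strategy at round `t`, with step `η` and zero initial
history (learner matrix `−A`). -/
noncomputable def discPlay {n m : ℕ} (η : ℝ) (A : Matrix (Fin n) (Fin m) ℝ)
    (x : ℕ → Fin n → ℝ) (t : ℕ) (i : Fin m) : ℝ :=
  Real.exp (-(η * ∑ s ∈ Finset.range t, ∑ k, x s k * A k i)) /
    ∑ j, Real.exp (-(η * ∑ s ∈ Finset.range t, ∑ k, x s k * A k j))

/-- The optimizer's discrete-time reward over `T` rounds against the MWU learner. -/
noncomputable def Rdisc {n m : ℕ} (η : ℝ) (A : Matrix (Fin n) (Fin m) ℝ)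
    (T : ℕ) (x : ℕ → Fin n → ℝ) : ℝ :=
  ∑ t ∈ Finset.range T, ∑ k, ∑ i, x t k * A k i * discPlay η A x t i


section AuxStmt14
open Real Finset

lemma aux_mono (t a b : ℝ) (ht : 0 ≤ t) :
    0 ≤ (a - b) * (Real.exp (-(t*b)) - Real.exp (-(t*a))) := by
  rcases le_total a b with h | h
  · have h2 : Real.exp (-(t*b)) ≤ Real.exp (-(t*a)) := Real.exp_le_exp.2 (by nlinarith)
    nlinarith [mul_nonneg (sub_nonneg.2 h) (sub_nonneg.2 h2)]
  · have h2 : Real.exp (-(t*a)) ≤ Real.exp (-(t*b)) := Real.exp_le_exp.2 (by nlinarith)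
    exact mul_nonneg (by linarith) (by linarith)

lemma aux_special (t a b Cm : ℝ) (ht : 0 ≤ t) (ha : t * |a| ≤ Cm) (hb : t * |b| ≤ Cm) :
    Real.exp (-Cm) * (t * (a-b)^2) ≤ (a - b) * (Real.exp (-(t*b)) - Real.exp (-(t*a))) := by
  rcases le_total b a with h | h
  · have h1 : Real.exp (-(t*a)) * (t*(a-b)) ≤ Real.exp (-(t*b)) - Real.exp (-(t*a)) := by
      have := Real.add_one_le_exp (t*(a-b))
      have h2 : Real.exp (-(t*b)) = Real.exp (-(t*a)) * Real.exp (t*(a-b)) := by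
        rw [← Real.exp_add]; ring_nf
      rw [h2]; nlinarith [Real.exp_pos (-(t*a))]
    have h3 : Real.exp (-Cm) ≤ Real.exp (-(t*a)) := by
      apply Real.exp_le_exp.2
      have : t * a ≤ t * |a| := mul_le_mul_of_nonneg_left (le_abs_self a) ht
      linarith
    have key : Real.exp (-Cm) * (t*(a-b)^2) ≤ Real.exp (-(t*a)) * (t*(a-b)^2) :=
      mul_le_mul_of_nonneg_right h3 (by positivity)
    have h4 : Real.exp (-(t*a)) * (t*(a-b)) * (a-b) ≤
        (a - b) * (Real.exp (-(t*b)) - Real.exp (-(t*a))) := by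
      nlinarith [mul_le_mul_of_nonneg_right h1 (sub_nonneg.2 h)]
    nlinarith
  · have h1 : Real.exp (-(t*b)) * (t*(b-a)) ≤ Real.exp (-(t*a)) - Real.exp (-(t*b)) := by
      have := Real.add_one_le_exp (t*(b-a))
      have h2 : Real.exp (-(t*a)) = Real.exp (-(t*b)) * Real.exp (t*(b-a)) := by
        rw [← Real.exp_add]; ring_nf
      rw [h2]; nlinarith [Real.exp_pos (-(t*b))]
    have h3 : Real.exp (-Cm) ≤ Real.exp (-(t*b)) := by
      apply Real.exp_le_exp.2
      have : t * b ≤ t * |b| := mul_le_mul_of_nonneg_left (le_abs_self b) ht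
      linarith
    have key : Real.exp (-Cm) * (t*(b-a)^2) ≤ Real.exp (-(t*b)) * (t*(b-a)^2) :=
      mul_le_mul_of_nonneg_right h3 (by positivity)
    have h4 : Real.exp (-(t*b)) * (t*(b-a)) * (b-a) ≤
        (b - a) * (Real.exp (-(t*a)) - Real.exp (-(t*b))) := by
      nlinarith [mul_le_mul_of_nonneg_right h1 (sub_nonneg.2 h)]
    nlinarith


/-- per-term bound: replacing r by ρ costs at most K η (gj+gl). -/
lemma aux_term (η δ Cm : ℝ) (hη0 : 0 ≤ η) (hδ0 : 0 ≤ δ) (hη1 : η ≤ 1) (hδ1 : δ ≤ 1)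
    (cj cl gj gl : ℝ) (hgj : 0 ≤ gj) (hgl : 0 ≤ gl) (hcj : |cj| ≤ Cm) (hcl : |cl| ≤ Cm) :
    (cj - cl) * (Real.exp (-(η*δ*cl)) - Real.exp (-(η*δ*cj)))
      - 2*Cm*Real.exp Cm * (η*(gj+gl))
    ≤ (cj - cl) * (Real.exp (-(η*(gl + δ*cl))) - Real.exp (-(η*(gj + δ*cj)))) := by
  have hCm : 0 ≤ Cm := le_trans (abs_nonneg _) hcj
  -- r = ρ * exp(-η g)
  have hrl : Real.exp (-(η*(gl + δ*cl))) = Real.exp (-(η*δ*cl)) * Real.exp (-(η*gl)) := by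
    rw [← Real.exp_add]; ring_nf
  have hrj : Real.exp (-(η*(gj + δ*cj))) = Real.exp (-(η*δ*cj)) * Real.exp (-(η*gj)) := by
    rw [← Real.exp_add]; ring_nf
  -- ρ ≤ exp Cm
  have hρb : ∀ c : ℝ, |c| ≤ Cm → Real.exp (-(η*δ*c)) ≤ Real.exp Cm := by
    intro c hc
    apply Real.exp_le_exp.2
    have h1 : -(η*δ*c) ≤ η*δ*|c| := by
      have := neg_abs_le (η*δ*c)
      have : |η*δ*c| = η*δ*|c| := by
        rw [abs_mul, abs_of_nonneg (by positivity : (0:ℝ) ≤ η*δ)]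
      nlinarith [neg_abs_le (η*δ*c), le_abs_self (η*δ*c)]
    have h2 : η*δ*|c| ≤ |c| := by nlinarith [mul_nonneg (sub_nonneg.2 (mul_le_one₀ hη1 hδ0 hδ1)) (abs_nonneg c)]
    linarith
  -- deviation: 0 ≤ ρ - r ≤ exp Cm * (η g)
  have hdev : ∀ c g' : ℝ, |c| ≤ Cm → 0 ≤ g' →
      0 ≤ Real.exp (-(η*δ*c)) - Real.exp (-(η*δ*c)) * Real.exp (-(η*g'))
      ∧ Real.exp (-(η*δ*c)) - Real.exp (-(η*δ*c)) * Real.exp (-(η*g')) ≤ Real.exp Cm * (η*g') := by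
    intro c g' hc hg'
    have hexp1 : Real.exp (-(η*g')) ≤ 1 := Real.exp_le_one_iff.2 (by nlinarith)
    have hexp2 : 1 - (η*g') ≤ Real.exp (-(η*g')) := by
      have := Real.add_one_le_exp (-(η*g')); linarith
    have hρpos : 0 < Real.exp (-(η*δ*c)) := Real.exp_pos _
    constructor
    · nlinarith
    · have : Real.exp (-(η*δ*c)) * (1 - Real.exp (-(η*g'))) ≤ Real.exp (-(η*δ*c)) * (η*g') := by
        apply mul_le_mul_of_nonneg_left (by linarith) (le_of_lt hρpos)
      have h2 := hρb c hc
      nlinarith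
  obtain ⟨hl0, hl1⟩ := hdev cl gl hcl hgl
  obtain ⟨hj0, hj1⟩ := hdev cj gj hcj hgj
  have habs : |cj - cl| ≤ 2*Cm := by
    calc |cj - cl| ≤ |cj| + |cl| := abs_sub _ _
      _ ≤ 2*Cm := by linarith
  rw [hrl, hrj]
  set X := Real.exp (-(η*δ*cl)) - Real.exp (-(η*δ*cl)) * Real.exp (-(η*gl)) with hXdef
  set Y := Real.exp (-(η*δ*cj)) - Real.exp (-(η*δ*cj)) * Real.exp (-(η*gj)) with hYdef
  have expand : (cj - cl) * (Real.exp (-(η*δ*cl)) * Real.exp (-(η*gl))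
      - Real.exp (-(η*δ*cj)) * Real.exp (-(η*gj)))
      = (cj - cl) * (Real.exp (-(η*δ*cl)) - Real.exp (-(η*δ*cj))) - (cj-cl)*(X - Y) := by
    rw [hXdef, hYdef]; ring
  rw [expand]
  have hb : (cj-cl)*(X-Y) ≤ 2*Cm*Real.exp Cm * (η*(gj+gl)) := by
    have h1 : (cj-cl)*(X-Y) ≤ |cj-cl| * |X-Y| := by
      calc (cj-cl)*(X-Y) ≤ |(cj-cl)*(X-Y)| := le_abs_self _
        _ = |cj-cl| * |X-Y| := abs_mul _ _
    have h2 : |X - Y| ≤ Real.exp Cm * (η*gl) + Real.exp Cm * (η*gj) := by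
      calc |X - Y| ≤ |X| + |Y| := abs_sub _ _
        _ ≤ Real.exp Cm * (η*gl) + Real.exp Cm * (η*gj) := by
            rw [abs_of_nonneg hl0, abs_of_nonneg hj0]; exact add_le_add hl1 hj1
    have h3 : |cj - cl| * |X - Y| ≤ 2*Cm * (Real.exp Cm * (η*gl) + Real.exp Cm * (η*gj)) := by
      apply mul_le_mul habs h2 (abs_nonneg _) (by linarith)
    nlinarith
  linarith

/-- double-sum symmetrization identity -/
lemma aux_identity {m : ℕ} (w c r : Fin m → ℝ) :
    (∑ l, w l * r l) * (∑ j, c j * w j) - (∑ l, w l) * (∑ j, c j * (w j * r j))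
    = (1/2) * ∑ j, ∑ l, (w j * w l) * ((c j - c l) * (r l - r j)) := by
  have A1 : ∑ j : Fin m, ∑ l : Fin m, (w j * w l) * (c j * r l)
      = (∑ l, w l * r l) * (∑ j, c j * w j) := by
    rw [Finset.sum_mul_sum]
    rw [Finset.sum_comm]
    exact Finset.sum_congr rfl fun j _ => Finset.sum_congr rfl fun l _ => by ring
  have A2 : ∑ j : Fin m, ∑ l : Fin m, (w j * w l) * (c j * r j)
      = (∑ l, w l) * (∑ j, c j * (w j * r j)) := by
    rw [Finset.sum_mul_sum]
    rw [Finset.sum_comm]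
    exact Finset.sum_congr rfl fun j _ => Finset.sum_congr rfl fun l _ => by ring
  have A3 : ∑ j : Fin m, ∑ l : Fin m, (w j * w l) * (c l * r l)
      = (∑ l, w l) * (∑ j, c j * (w j * r j)) := by
    rw [Finset.sum_mul_sum]
    exact Finset.sum_congr rfl fun j _ => Finset.sum_congr rfl fun l _ => by ring
  have A4 : ∑ j : Fin m, ∑ l : Fin m, (w j * w l) * (c l * r j)
      = (∑ l, w l * r l) * (∑ j, c j * w j) := by
    rw [Finset.sum_mul_sum]
    exact Finset.sum_congr rfl fun j _ => Finset.sum_congr rfl fun l _ => by ring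
  have expand : ∀ j l : Fin m, (w j * w l) * ((c j - c l) * (r l - r j))
      = (w j * w l) * (c j * r l) - (w j * w l) * (c j * r j)
        - (w j * w l) * (c l * r l) + (w j * w l) * (c l * r j) := fun j l => by ring
  calc (∑ l, w l * r l) * (∑ j, c j * w j) - (∑ l, w l) * (∑ j, c j * (w j * r j))
      = (1/2) * ((∑ j : Fin m, ∑ l : Fin m, (w j * w l) * (c j * r l))
          - (∑ j : Fin m, ∑ l : Fin m, (w j * w l) * (c j * r j))
          - (∑ j : Fin m, ∑ l : Fin m, (w j * w l) * (c l * r l))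
          + (∑ j : Fin m, ∑ l : Fin m, (w j * w l) * (c l * r j))) := by
        rw [A1, A2, A3, A4]; ring
    _ = (1/2) * ∑ j, ∑ l, (w j * w l) * ((c j - c l) * (r l - r j)) := by
        congr 1
        have B : ∑ j : Fin m, ∑ l : Fin m, (w j * w l) * ((c j - c l) * (r l - r j))
            = ∑ j : Fin m, ∑ l : Fin m, ((w j * w l) * (c j * r l) - (w j * w l) * (c j * r j)
              - (w j * w l) * (c l * r l) + (w j * w l) * (c l * r j)) :=
          Finset.sum_congr rfl fun j _ => Finset.sum_congr rfl fun l _ => expand j l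
        rw [B]
        simp only [Finset.sum_sub_distrib, Finset.sum_add_distrib]

set_option maxHeartbeats 2000000 in
lemma aux_core {m : ℕ} (η δ Cm Gm v Δ : ℝ) (g c w : Fin m → ℝ) (i₁ i₂ : Fin m) (hne : i₁ ≠ i₂)
    (hη0 : 0 < η) (hη1 : η ≤ 1) (hδ0 : 0 < δ) (hδ1 : δ ≤ 1)
    (hg0 : ∀ j, 0 ≤ g j) (hgG : ∀ j, g j ≤ Gm) (hcC : ∀ j, |c j| ≤ Cm)
    (hg1 : g i₁ = 0) (hg2 : g i₂ = 0) (hΔ : c i₁ - c i₂ = Δ)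
    (hw0 : ∀ j, 0 < w j) (hw1 : ∀ j, w j ≤ w i₁) (hw2 : ∀ j, w j ≤ w i₂)
    (hδsmall : δ * (2 * Cm * Real.exp (Gm + 2*Cm)) ≤ 1) :
    2*v + 2 * (δ^2 * Δ^2 * Real.exp (-(2*Cm)) / (2*(m:ℝ)^2)) * η ≤
      (∑ i, (v + g i + δ * c i) * (w i / ∑ j, w j)) +
      ∑ i, (v + g i - δ * c i) *
        (w i * Real.exp (-(η*(g i + δ * c i))) / ∑ j, w j * Real.exp (-(η*(g j + δ * c j)))) := by
  have hm : Nonempty (Fin m) := ⟨i₁⟩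
  have hm0 : 0 < m := i₁.pos
  have hm1 : (1:ℝ) ≤ (m:ℝ) := by exact_mod_cast hm0
  have hCm0 : 0 ≤ Cm := le_trans (abs_nonneg _) (hcC i₁)
  have hGm0 : 0 ≤ Gm := le_trans (hg0 i₁) (hgG i₁)
  set r : Fin m → ℝ := fun j => Real.exp (-(η*(g j + δ * c j))) with hrdef
  set ρ : Fin m → ℝ := fun j => Real.exp (-(η*δ*(c j))) with hρdef
  set W := ∑ j, w j with hWdef
  set S := ∑ j, w j * r j with hSdef
  have hW : 0 < W := Finset.sum_pos (fun j _ => hw0 j) univ_nonempty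
  have hr0 : ∀ j, 0 < r j := fun j => Real.exp_pos _
  have hS : 0 < S := Finset.sum_pos (fun j _ => mul_pos (hw0 j) (hr0 j)) univ_nonempty
  have hηδc : ∀ j, η*δ*|c j| ≤ Cm := by
    intro j
    have h2 : η*δ*|c j| ≤ |c j| := by
      nlinarith [mul_nonneg (sub_nonneg.2 (mul_le_one₀ hη1 hδ0.le hδ1)) (abs_nonneg (c j))]
    linarith [hcC j]
  have hηg : ∀ j, η * g j ≤ Gm := by
    intro j
    nlinarith [hg0 j, hgG j, mul_le_mul_of_nonneg_right hη1 (hg0 j)]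
  have hrup : ∀ j, r j ≤ Real.exp Cm := by
    intro j
    apply Real.exp_le_exp.2
    have h1 : -(η*(g j + δ * c j)) = -(η*g j) + -(η*δ*c j) := by ring
    have h2 : -(η*δ*c j) ≤ η*δ*|c j| := by
      have habs : |η*δ*c j| = η*δ*|c j| := by
        rw [abs_mul, abs_of_nonneg (mul_nonneg hη0.le hδ0.le)]
      linarith [neg_le_abs (η*δ*c j)]
    have h3 : 0 ≤ η * g j := mul_nonneg hη0.le (hg0 j)
    rw [h1]; linarith [hηδc j]
  have hrlow : ∀ j, Real.exp (-(Gm + Cm)) ≤ r j := by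
    intro j
    apply Real.exp_le_exp.2
    have h2 : η*δ*c j ≤ η*δ*|c j| :=
      mul_le_mul_of_nonneg_left (le_abs_self (c j)) (mul_nonneg hη0.le hδ0.le)
    have : η*(g j + δ * c j) ≤ Gm + Cm := by
      have := hηg j; have := hηδc j
      nlinarith
    linarith
  -- sums
  set Gp := ∑ j, g j * w j with hGpdef
  set Cp := ∑ j, c j * w j with hCpdef
  set Gq := ∑ j, g j * (w j * r j) with hGqdef
  set Cq := ∑ j, c j * (w j * r j) with hCqdef
  have hGp0 : 0 ≤ Gp := Finset.sum_nonneg fun j _ => mul_nonneg (hg0 j) (hw0 j).le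
  have hGq0 : 0 ≤ Gq := Finset.sum_nonneg fun j _ =>
    mul_nonneg (hg0 j) (mul_pos (hw0 j) (hr0 j)).le
  -- rewrite the two sums
  have e1 : (∑ i, (v + g i + δ * c i) * (w i / W)) = v + (Gp + δ*Cp)/W := by
    have a1 : (∑ i, (v + g i + δ * c i) * (w i / W)) = (∑ i, (v + g i + δ * c i) * w i) / W := by
      rw [Finset.sum_div]; exact Finset.sum_congr rfl fun i _ => (mul_div_assoc _ _ _).symm
    have a2 : (∑ i, (v + g i + δ * c i) * w i) = v*W + (Gp + δ*Cp) := by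
      calc (∑ i, (v + g i + δ * c i) * w i)
          = ∑ i, (v * w i + g i * w i + δ * (c i * w i)) :=
            Finset.sum_congr rfl fun i _ => by ring
        _ = (∑ i, v * w i) + (∑ i, g i * w i) + (∑ i, δ * (c i * w i)) := by
            rw [Finset.sum_add_distrib, Finset.sum_add_distrib]
        _ = v*W + (Gp + δ*Cp) := by rw [← Finset.mul_sum, ← Finset.mul_sum]; ring
    rw [a1, a2, add_div, mul_div_cancel_right₀ _ hW.ne']
  have e2 : (∑ i, (v + g i - δ * c i) * (w i * r i / S)) = v + (Gq - δ*Cq)/S := by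
    have a1 : (∑ i, (v + g i - δ * c i) * (w i * r i / S))
        = (∑ i, (v + g i - δ * c i) * (w i * r i)) / S := by
      rw [Finset.sum_div]; exact Finset.sum_congr rfl fun i _ => (mul_div_assoc _ _ _).symm
    have a2 : (∑ i, (v + g i - δ * c i) * (w i * r i)) = v*S + (Gq - δ*Cq) := by
      calc (∑ i, (v + g i - δ * c i) * (w i * r i))
          = ∑ i, (v * (w i * r i) + g i * (w i * r i) - δ * (c i * (w i * r i))) :=
            Finset.sum_congr rfl fun i _ => by ring
        _ = (∑ i, (v * (w i * r i) + g i * (w i * r i))) - (∑ i, δ * (c i * (w i * r i))) := by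
            rw [Finset.sum_sub_distrib]
        _ = (∑ i, v * (w i * r i)) + (∑ i, g i * (w i * r i)) - (∑ i, δ * (c i * (w i * r i))) := by
            rw [Finset.sum_add_distrib]
        _ = v*S + (Gq - δ*Cq) := by rw [← Finset.mul_sum, ← Finset.mul_sum]; ring
    rw [a1, a2, add_div, mul_div_cancel_right₀ _ hS.ne']
  rw [e1, e2]
  have combine : (Gp + δ*Cp)/W + (Gq - δ*Cq)/S = (S*(Gp + δ*Cp) + W*(Gq - δ*Cq))/(W*S) := by
    field_simp
  have hmain : 2 * (δ^2 * Δ^2 * Real.exp (-(2*Cm)) / (2*(m:ℝ)^2)) * η * (W*S)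
      ≤ S*(Gp + δ*Cp) + W*(Gq - δ*Cq) := by
    -- identity
    have hid : S*Cp - W*Cq = (1/2) * ∑ j, ∑ l, (w j * w l) * ((c j - c l) * (r l - r j)) :=
      aux_identity w c r
    set K := 2*Cm*Real.exp Cm with hKdef
    have hK0 : 0 ≤ K := by positivity
    set Tfull := ∑ j, ∑ l, (w j * w l) * ((c j - c l) * (r l - r j)) with hTf
    set Trho := ∑ j, ∑ l, (w j * w l) * ((c j - c l) * (ρ l - ρ j)) with hTr
    -- termwise bound
    have hterm : ∀ j l : Fin m,
        (w j * w l) * ((c j - c l) * (ρ l - ρ j)) - (w j * w l) * (K*(η*(g j + g l)))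
        ≤ (w j * w l) * ((c j - c l) * (r l - r j)) := by
      intro j l
      have hww : 0 ≤ w j * w l := (mul_pos (hw0 j) (hw0 l)).le
      have h := aux_term η δ Cm hη0.le hδ0.le hη1 hδ1 (c j) (c l) (g j) (g l)
        (hg0 j) (hg0 l) (hcC j) (hcC l)
      have h2 := mul_le_mul_of_nonneg_left h hww
      calc (w j * w l) * ((c j - c l) * (ρ l - ρ j)) - (w j * w l) * (K*(η*(g j + g l)))
          = (w j * w l) * ((c j - c l) * (ρ l - ρ j) - 2*Cm*Real.exp Cm * (η*(g j + g l))) := by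
            rw [hKdef]; ring
        _ ≤ (w j * w l) * ((c j - c l) * (r l - r j)) := h2
    have hgsum : ∑ j, ∑ l, (w j * w l) * (K*(η*(g j + g l))) = K*η*(2*(W*Gp)) := by
      have inner : ∀ j : Fin m, ∑ l, (w j * w l) * (K*(η*(g j + g l)))
          = K*η*((g j * w j) * W + w j * Gp) := by
        intro j
        calc ∑ l, (w j * w l) * (K*(η*(g j + g l)))
            = ∑ l, (K*η*((g j * w j) * w l) + K*η*(w j * (g l * w l))) :=
              Finset.sum_congr rfl fun l _ => by ring
          _ = (∑ l, K*η*((g j * w j) * w l)) + (∑ l, K*η*(w j * (g l * w l))) :=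
              Finset.sum_add_distrib
          _ = K*η*((g j * w j) * W + w j * Gp) := by
              rw [← Finset.mul_sum, ← Finset.mul_sum, ← Finset.mul_sum, ← Finset.mul_sum]
              ring
      calc ∑ j, ∑ l, (w j * w l) * (K*(η*(g j + g l)))
          = ∑ j, K*η*((g j * w j) * W + w j * Gp) := Finset.sum_congr rfl fun j _ => inner j
        _ = K*η*(2*(W*Gp)) := by
            rw [← Finset.mul_sum]
            rw [Finset.sum_add_distrib, ← Finset.sum_mul, ← Finset.sum_mul]
            ring
    have hb1 : Trho - K*η*(2*(W*Gp)) ≤ Tfull := by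
      have h := Finset.sum_le_sum (f := fun j => ∑ l, ((w j * w l) * ((c j - c l) * (ρ l - ρ j))
            - (w j * w l) * (K*(η*(g j + g l)))))
        (g := fun j => ∑ l, (w j * w l) * ((c j - c l) * (r l - r j)))
        (fun j (_ : j ∈ Finset.univ) => Finset.sum_le_sum fun l _ => by
          have := hterm j l; linarith)
      have hsplit : ∑ j : Fin m, ∑ l : Fin m, ((w j * w l) * ((c j - c l) * (ρ l - ρ j))
            - (w j * w l) * (K*(η*(g j + g l))))
          = Trho - ∑ j, ∑ l, (w j * w l) * (K*(η*(g j + g l))) := by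
        simp only [Finset.sum_sub_distrib, hTr]
      rw [hsplit, hgsum] at h
      exact h
    -- extraction of the special pair
    have hFnn : ∀ j l : Fin m, 0 ≤ (w j * w l) * ((c j - c l) * (ρ l - ρ j)) := by
      intro j l
      apply mul_nonneg (mul_pos (hw0 j) (hw0 l)).le
      have h := aux_mono (η*δ) (c j) (c l) (mul_nonneg hη0.le hδ0.le)
      simpa only [hρdef] using h
    have hspecial : ∀ a b : Fin m, Real.exp (-Cm) * ((η*δ) * (c a - c b)^2)
        ≤ (c a - c b) * (ρ b - ρ a) := by
      intro a b
      have h := aux_special (η*δ) (c a) (c b) Cm (mul_nonneg hη0.le hδ0.le)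
        (hηδc a) (hηδc b)
      simpa only [hρdef] using h
    have hb2 : 2*((w i₁ * w i₂) * (Real.exp (-Cm) * ((η*δ) * Δ^2))) ≤ Trho := by
      have hsub : ({i₁, i₂} : Finset (Fin m)) ⊆ Finset.univ := Finset.subset_univ _
      have step : ∑ j ∈ ({i₁, i₂} : Finset (Fin m)), ∑ l, (w j * w l) * ((c j - c l) * (ρ l - ρ j))
          ≤ Trho := by
        apply Finset.sum_le_sum_of_subset_of_nonneg hsub
        intro j _ _
        exact Finset.sum_nonneg fun l _ => hFnn j l
      rw [Finset.sum_pair hne] at step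
      have p1 : (w i₁ * w i₂) * ((c i₁ - c i₂) * (ρ i₂ - ρ i₁))
          ≤ ∑ l, (w i₁ * w l) * ((c i₁ - c l) * (ρ l - ρ i₁)) :=
        Finset.single_le_sum (fun l _ => hFnn i₁ l) (Finset.mem_univ i₂)
      have p2 : (w i₂ * w i₁) * ((c i₂ - c i₁) * (ρ i₁ - ρ i₂))
          ≤ ∑ l, (w i₂ * w l) * ((c i₂ - c l) * (ρ l - ρ i₂)) :=
        Finset.single_le_sum (fun l _ => hFnn i₂ l) (Finset.mem_univ i₁)
      have q1 : (w i₁ * w i₂) * (Real.exp (-Cm) * ((η*δ) * Δ^2))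
          ≤ (w i₁ * w i₂) * ((c i₁ - c i₂) * (ρ i₂ - ρ i₁)) := by
        apply mul_le_mul_of_nonneg_left _ (mul_pos (hw0 i₁) (hw0 i₂)).le
        have := hspecial i₁ i₂; rw [hΔ] at this ⊢; exact this
      have q2 : (w i₁ * w i₂) * (Real.exp (-Cm) * ((η*δ) * Δ^2))
          ≤ (w i₂ * w i₁) * ((c i₂ - c i₁) * (ρ i₁ - ρ i₂)) := by
        have h := hspecial i₂ i₁
        have hΔ' : (c i₂ - c i₁)^2 = Δ^2 := by rw [← hΔ]; ring
        rw [hΔ'] at h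
        calc (w i₁ * w i₂) * (Real.exp (-Cm) * ((η*δ) * Δ^2))
            = (w i₂ * w i₁) * (Real.exp (-Cm) * ((η*δ) * Δ^2)) := by ring
          _ ≤ (w i₂ * w i₁) * ((c i₂ - c i₁) * (ρ i₁ - ρ i₂)) :=
              mul_le_mul_of_nonneg_left h (mul_pos (hw0 i₂) (hw0 i₁)).le
      linarith
    -- put together
    set X := (w i₁ * w i₂) * (Real.exp (-Cm) * ((η*δ) * Δ^2)) with hXdef
    have step1 : X - K*η*(W*Gp) ≤ S*Cp - W*Cq := by
      rw [hid]; linarith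
    have step2 : δ*X - δ*(K*η)*(W*Gp) ≤ δ*(S*Cp - W*Cq) := by
      have h := mul_le_mul_of_nonneg_left step1 hδ0.le
      calc δ*X - δ*(K*η)*(W*Gp) = δ*(X - K*η*(W*Gp)) := by ring
        _ ≤ δ*(S*Cp - W*Cq) := h
    have hSlow : Real.exp (-(Gm+Cm)) * W ≤ S := by
      rw [hSdef, Finset.mul_sum]
      exact Finset.sum_le_sum fun j _ => by
        rw [mul_comm (Real.exp (-(Gm+Cm))) (w j)]
        exact mul_le_mul_of_nonneg_left (hrlow j) (hw0 j).le
    have hδK : δ * K ≤ Real.exp (-(Gm+Cm)) := by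
      have he : Real.exp (Gm + 2*Cm) = Real.exp Cm * Real.exp (Gm + Cm) := by
        rw [← Real.exp_add]; ring_nf
      have h1 : δ * K * Real.exp (Gm+Cm) ≤ 1 := by
        rw [hKdef]
        calc δ * (2*Cm*Real.exp Cm) * Real.exp (Gm+Cm)
            = δ * (2 * Cm * Real.exp (Gm + 2*Cm)) := by rw [he]; ring
          _ ≤ 1 := hδsmall
      have h2 : Real.exp (-(Gm+Cm)) = 1 / Real.exp (Gm+Cm) := by
        rw [Real.exp_neg]; ring
      rw [h2, le_div_iff₀ (Real.exp_pos _)]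
      exact h1
    have step3 : δ*(K*η)*(W*Gp) ≤ S*Gp := by
      have h5 : δ*(K*η)*W ≤ S := by
        have h6 : δ*(K*η) ≤ Real.exp (-(Gm+Cm)) := by
          have h7 : δ*(K*η) = δ*K*η := by ring
          have h8 : δ*K*η ≤ δ*K*1 :=
            mul_le_mul_of_nonneg_left hη1 (mul_nonneg hδ0.le hK0)
          rw [h7]; linarith
        calc δ*(K*η)*W ≤ Real.exp (-(Gm+Cm)) * W :=
              mul_le_mul_of_nonneg_right h6 hW.le
          _ ≤ S := hSlow
      calc δ*(K*η)*(W*Gp) = (δ*(K*η)*W)*Gp := by ring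
        _ ≤ S*Gp := mul_le_mul_of_nonneg_right h5 hGp0
    have hWub1 : W ≤ (m:ℝ) * w i₁ := by
      calc W ≤ ∑ _j : Fin m, w i₁ := Finset.sum_le_sum fun j _ => hw1 j
        _ = (m:ℝ) * w i₁ := by
          rw [Finset.sum_const, Finset.card_univ, Fintype.card_fin, nsmul_eq_mul]
    have hWub2 : W ≤ (m:ℝ) * w i₂ := by
      calc W ≤ ∑ _j : Fin m, w i₂ := Finset.sum_le_sum fun j _ => hw2 j
        _ = (m:ℝ) * w i₂ := by
          rw [Finset.sum_const, Finset.card_univ, Fintype.card_fin, nsmul_eq_mul]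
    have hSup : S ≤ Real.exp Cm * W := by
      rw [hSdef, Finset.mul_sum]
      exact Finset.sum_le_sum fun j _ => by
        rw [mul_comm (Real.exp Cm) (w j)]
        exact mul_le_mul_of_nonneg_left (hrup j) (hw0 j).le
    have hWS : W * S ≤ (m:ℝ)^2 * Real.exp Cm * (w i₁ * w i₂) := by
      calc W * S ≤ W * (Real.exp Cm * W) := mul_le_mul_of_nonneg_left hSup hW.le
        _ = Real.exp Cm * (W * W) := by ring
        _ ≤ Real.exp Cm * (((m:ℝ) * w i₁) * ((m:ℝ) * w i₂)) := by
            apply mul_le_mul_of_nonneg_left _ (Real.exp_pos _).le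
            exact mul_le_mul hWub1 hWub2 hW.le (mul_nonneg (Nat.cast_nonneg m) (hw0 i₁).le)
        _ = (m:ℝ)^2 * Real.exp Cm * (w i₁ * w i₂) := by ring
    have hm2 : (0:ℝ) < (m:ℝ)^2 := by positivity
    have hexp2 : Real.exp (-(2*Cm)) * Real.exp Cm = Real.exp (-Cm) := by
      rw [← Real.exp_add]; ring_nf
    have hfinal : 2 * (δ^2 * Δ^2 * Real.exp (-(2*Cm)) / (2*(m:ℝ)^2)) * η * (W*S) ≤ δ*X := by
      have c0 : 0 ≤ δ^2 * Δ^2 * Real.exp (-(2*Cm)) * η :=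
        mul_nonneg (by positivity) hη0.le
      have h6 : (δ^2 * Δ^2 * Real.exp (-(2*Cm)) * η) * (W*S)
          ≤ (δ^2 * Δ^2 * Real.exp (-(2*Cm)) * η) * ((m:ℝ)^2 * Real.exp Cm * (w i₁ * w i₂)) :=
        mul_le_mul_of_nonneg_left hWS c0
      have lhs_eq : 2 * (δ^2 * Δ^2 * Real.exp (-(2*Cm)) / (2*(m:ℝ)^2)) * η * (W*S)
          = ((δ^2 * Δ^2 * Real.exp (-(2*Cm)) * η) * (W*S))/(m:ℝ)^2 := by
        field_simp
      have rhs_eq : ((δ^2 * Δ^2 * Real.exp (-(2*Cm)) * η) * ((m:ℝ)^2 * Real.exp Cm * (w i₁ * w i₂)))/(m:ℝ)^2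
          = δ*X := by
        rw [hXdef, ← hexp2]
        field_simp
      rw [lhs_eq, ← rhs_eq]
      exact (div_le_div_iff_of_pos_right hm2).2 h6
    have expand : S*(Gp + δ*Cp) + W*(Gq - δ*Cq) = δ*(S*Cp - W*Cq) + S*Gp + W*Gq := by ring
    rw [expand]
    have hGqW : 0 ≤ W*Gq := mul_nonneg hW.le hGq0
    calc 2 * (δ^2 * Δ^2 * Real.exp (-(2*Cm)) / (2*(m:ℝ)^2)) * η * (W*S)
        ≤ δ*X := hfinal
      _ ≤ δ*(S*Cp - W*Cq) + δ*(K*η)*(W*Gp) := by linarith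
      _ ≤ δ*(S*Cp - W*Cq) + S*Gp := by linarith
      _ ≤ δ*(S*Cp - W*Cq) + S*Gp + W*Gq := by linarith
  calc 2*v + 2 * (δ^2 * Δ^2 * Real.exp (-(2*Cm)) / (2*(m:ℝ)^2)) * η
      ≤ 2*v + (S*(Gp + δ*Cp) + W*(Gq - δ*Cq))/(W*S) := by
        have := (le_div_iff₀ (mul_pos hW hS)).2 hmain
        linarith
    _ = (v + (Gp + δ*Cp)/W) + (v + (Gq - δ*Cq)/S) := by rw [← combine]; ring

end AuxStmt14

set_option maxHeartbeats 2000000 in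
/-- if some minmax strategy `x` has two best responses `i₁ ≠ i₂` that
are distinguished by a row `k` in the support of `x`, then there is a constant
`C_A > 0` such that for every `η ∈ (0,1)` and every even `T` the optimizer has a
strategy sequence gaining at least `T·Val(A) + C_A·η·T` against MWU. -/
theorem stmt14 {n m : ℕ} (hn : 0 < n) (hm : 0 < m) (A : Matrix (Fin n) (Fin m) ℝ)
    (x : Fin n → ℝ) (hx : x ∈ stdSimplex ℝ (Fin n))
    (hminmax : (⨅ j, ∑ k, x k * A k j) = gameValue A)
    (i₁ i₂ : Fin m) (hne : i₁ ≠ i₂) (hi₁ : i₁ ∈ BRset A x) (hi₂ : i₂ ∈ BRset A x)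
    (k : Fin n) (hk : 0 < x k) (hA : A k i₁ ≠ A k i₂) :
    ∃ C : ℝ, 0 < C ∧ ∀ η : ℝ, 0 < η → η < 1 → ∀ T : ℕ, Even T →
      ∃ xs : ℕ → Fin n → ℝ, (∀ t, xs t ∈ stdSimplex ℝ (Fin n)) ∧
        (T : ℝ) * gameValue A + C * η * T ≤ Rdisc η A T xs := by
  classical
  haveI : Nonempty (Fin m) := ⟨i₁⟩
  obtain ⟨hxnn, hxsum⟩ := hx
  set u : Fin m → ℝ := fun j => ∑ k', x k' * A k' j with hudef
  set v : ℝ := ⨅ j, u j with hvdef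
  have hv : v = gameValue A := hminmax
  have hall : ∀ j, v ≤ u j := fun j =>
    ciInf_le (Set.Finite.bddBelow (Set.finite_range u)) j
  have hBR1 : ∀ i, u i₁ ≤ u i := (Finset.mem_filter.1 hi₁).2
  have hBR2 : ∀ i, u i₂ ≤ u i := (Finset.mem_filter.1 hi₂).2
  have hu1 : u i₁ = v := le_antisymm (le_ciInf hBR1) (hall i₁)
  have hu2 : u i₂ = v := le_antisymm (le_ciInf hBR2) (hall i₂)
  set g : Fin m → ℝ := fun j => u j - v with hgdef
  set c : Fin m → ℝ := fun j => A k j - u j with hcdef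
  have hg0 : ∀ j, 0 ≤ g j := fun j => sub_nonneg.2 (hall j)
  have hg1 : g i₁ = 0 := by simp [hgdef, hu1]
  have hg2 : g i₂ = 0 := by simp [hgdef, hu2]
  set Δ : ℝ := A k i₁ - A k i₂ with hΔdef
  have hΔ0 : Δ ≠ 0 := sub_ne_zero.2 hA
  have hΔ : c i₁ - c i₂ = Δ := by simp only [hcdef]; rw [hu1, hu2]; ring
  have hmU : (Finset.univ : Finset (Fin m)).Nonempty := ⟨i₁, Finset.mem_univ _⟩
  set Cm : ℝ := Finset.univ.sup' hmU (fun j => |c j|) with hCmdef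
  have hcC : ∀ j, |c j| ≤ Cm := fun j => Finset.le_sup' (fun j => |c j|) (Finset.mem_univ j)
  have hCm0 : 0 ≤ Cm := le_trans (abs_nonneg _) (hcC i₁)
  set Gm : ℝ := Finset.univ.sup' hmU g with hGmdef
  have hgG : ∀ j, g j ≤ Gm := fun j => Finset.le_sup' g (Finset.mem_univ j)
  set D : ℝ := 2 * Cm * Real.exp (Gm + 2*Cm) with hDdef
  have hD0 : 0 ≤ D := by positivity
  set δ : ℝ := min (x k) (1/(1+D)) with hδdef
  have hδ0 : 0 < δ := lt_min hk (by positivity)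
  have hxk1 : x k ≤ 1 := by
    rw [← hxsum]
    exact Finset.single_le_sum (fun i _ => hxnn i) (Finset.mem_univ k)
  have hδxk : δ ≤ x k := min_le_left _ _
  have hδ1 : δ ≤ 1 := le_trans hδxk hxk1
  have hδsmall : δ * D ≤ 1 := by
    have h1 : δ ≤ 1/(1+D) := min_le_right _ _
    have h2 : δ * D ≤ (1/(1+D)) * D := mul_le_mul_of_nonneg_right h1 hD0
    have h3 : (1/(1+D)) * D ≤ 1 := by
      rw [div_mul_eq_mul_div, one_mul, div_le_one (by positivity)]
      linarith
    linarith
  have hΔsq : 0 < Δ^2 := by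
    rcases hΔ0.lt_or_gt with h | h
    · nlinarith
    · nlinarith
  have hmr : (0:ℝ) < (m:ℝ) := by exact_mod_cast hm
  set C : ℝ := δ^2 * Δ^2 * Real.exp (-(2*Cm)) / (2*(m:ℝ)^2) with hCdef
  have hC : 0 < C := by
    apply div_pos
    · exact mul_pos (mul_pos (pow_pos hδ0 2) hΔsq) (Real.exp_pos _)
    · positivity
  refine ⟨C, hC, ?_⟩
  intro η hη0 hη1 T hTeven
  obtain ⟨h, rfl⟩ : ∃ h, T = 2*h := by
    obtain ⟨r, hr⟩ := hTeven; exact ⟨r, by omega⟩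
  set xs : ℕ → Fin n → ℝ := fun t i =>
    if Even t then (1-δ)*x i + δ*(if i = k then 1 else 0)
    else (1+δ)*x i - δ*(if i = k then 1 else 0) with hxsdef
  have hsimplex : ∀ t, xs t ∈ stdSimplex ℝ (Fin n) := by
    intro t
    by_cases ht : Even t
    · refine ⟨fun i => ?_, ?_⟩
      · simp only [hxsdef, if_pos ht]
        have h1 : 0 ≤ (1-δ)*x i := mul_nonneg (by linarith) (hxnn i)
        by_cases hik : i = k
        · simp only [if_pos hik]; linarith
        · simp only [if_neg hik]; linarith
      · simp only [hxsdef, if_pos ht]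
        rw [Finset.sum_add_distrib, ← Finset.mul_sum, ← Finset.mul_sum, hxsum]
        simp
    · refine ⟨fun i => ?_, ?_⟩
      · simp only [hxsdef, if_neg ht]
        by_cases hik : i = k
        · subst hik
          have h2 : δ ≤ x i := hδxk
          simp only [if_pos rfl, if_true]
          nlinarith [hxnn i, mul_nonneg hδ0.le (hxnn i)]
        · simp only [if_neg hik]
          nlinarith [hxnn i, mul_nonneg hδ0.le (hxnn i)]
      · simp only [hxsdef, if_neg ht]
        rw [Finset.sum_sub_distrib, ← Finset.mul_sum, ← Finset.mul_sum, hxsum]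
        simp
  -- per-round strategy value
  have hval : ∀ t j, (∑ i, xs t i * A i j)
      = u j + (if Even t then δ * c j else -(δ * c j)) := by
    intro t j
    have hone : (∑ i, (if i = k then (1:ℝ) else 0) * A i j) = A k j := by
      rw [Finset.sum_eq_single k]
      · simp
      · intro b _ hb; simp [hb]
      · intro hmem; exact absurd (Finset.mem_univ k) hmem
    by_cases ht : Even t
    · simp only [hxsdef, if_pos ht]
      calc (∑ i, ((1-δ)*x i + δ*(if i = k then 1 else 0)) * A i j)
          = ∑ i, ((1-δ)*(x i * A i j) + δ*((if i = k then (1:ℝ) else 0) * A i j)) :=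
            Finset.sum_congr rfl fun i _ => by ring
        _ = (1-δ)*(∑ i, x i * A i j) + δ*(∑ i, (if i = k then (1:ℝ) else 0) * A i j) := by
            rw [Finset.sum_add_distrib, ← Finset.mul_sum, ← Finset.mul_sum]
        _ = u j + δ * c j := by rw [hone]; simp only [hudef, hcdef]; ring
    · simp only [hxsdef, if_neg ht]
      calc (∑ i, ((1+δ)*x i - δ*(if i = k then 1 else 0)) * A i j)
          = ∑ i, ((1+δ)*(x i * A i j) - δ*((if i = k then (1:ℝ) else 0) * A i j)) :=
            Finset.sum_congr rfl fun i _ => by ring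
        _ = (1+δ)*(∑ i, x i * A i j) - δ*(∑ i, (if i = k then (1:ℝ) else 0) * A i j) := by
            rw [Finset.sum_sub_distrib, ← Finset.mul_sum, ← Finset.mul_sum]
        _ = u j + -(δ * c j) := by rw [hone]; simp only [hudef, hcdef]; ring
  -- cumulative losses
  have hL : ∀ t j, (∑ s ∈ Finset.range t, ∑ i, xs s i * A i j)
      = (t:ℝ) * u j + (if Even t then 0 else δ * c j) := by
    intro t j
    induction t with
    | zero => simp
    | succ t ih =>
      rw [Finset.sum_range_succ, ih, hval t j]
      by_cases ht : Even t
      · have hodd : ¬ Even (t+1) := by simp [Nat.even_add_one, ht]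
        simp only [if_pos ht, if_neg hodd]
        push_cast; ring
      · have heven : Even (t+1) := by simp [Nat.even_add_one, ht]
        simp only [if_neg ht, if_pos heven]
        push_cast; ring
  have hLe : ∀ (a : ℕ) j, (∑ s ∈ Finset.range (2*a), ∑ i, xs s i * A i j)
      = ((2*a : ℕ):ℝ) * u j := by
    intro a j; rw [hL]; simp [even_two_mul]
  have hLo : ∀ (a : ℕ) j, (∑ s ∈ Finset.range (2*a+1), ∑ i, xs s i * A i j)
      = ((2*a : ℕ):ℝ) * u j + (u j + δ * c j) := by
    intro a j; rw [hL]
    have : ¬ Even (2*a+1) := by simp [Nat.even_add_one, even_two_mul]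
    rw [if_neg this]
    push_cast; ring
  -- rewards
  set R : ℕ → ℝ := fun t => ∑ k', ∑ i, xs t k' * A k' i * discPlay η A xs t i with hRdef
  have hreward : ∀ t, R t = ∑ i, (∑ k', xs t k' * A k' i) * discPlay η A xs t i := by
    intro t
    simp only [hRdef]
    rw [Finset.sum_comm]
    exact Finset.sum_congr rfl fun i _ => (Finset.sum_mul _ _ _).symm
  have hδsmall' : δ * (2*Cm*Real.exp (Gm+2*Cm)) ≤ 1 := by rw [← hDdef]; exact hδsmall
  have pair : ∀ s : ℕ, 2*v + 2*C*η ≤ R (2*s) + R (2*s+1) := by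
    intro s
    set w : Fin m → ℝ := fun j => Real.exp (-(η * (((2*s : ℕ):ℝ) * u j))) with hwdef
    have hw0 : ∀ j, 0 < w j := fun j => Real.exp_pos _
    have hcast : (0:ℝ) ≤ ((2*s : ℕ):ℝ) := Nat.cast_nonneg _
    have hwmax1 : ∀ j, w j ≤ w i₁ := by
      intro j
      apply Real.exp_le_exp.2
      have h1 : η * (((2*s:ℕ):ℝ) * u i₁) ≤ η * (((2*s:ℕ):ℝ) * u j) :=
        mul_le_mul_of_nonneg_left (mul_le_mul_of_nonneg_left (hBR1 j) hcast) hη0.le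
      linarith
    have hwmax2 : ∀ j, w j ≤ w i₂ := by
      intro j
      apply Real.exp_le_exp.2
      have h1 : η * (((2*s:ℕ):ℝ) * u i₂) ≤ η * (((2*s:ℕ):ℝ) * u j) :=
        mul_le_mul_of_nonneg_left (mul_le_mul_of_nonneg_left (hBR2 j) hcast) hη0.le
      linarith
    have heven : R (2*s) = ∑ i, (v + g i + δ * c i) * (w i / ∑ j, w j) := by
      rw [hreward]
      refine Finset.sum_congr rfl fun i _ => ?_
      congr 1
      · rw [hval, if_pos (even_two_mul s)]
        simp only [hgdef]; ring
      · simp only [discPlay, hLe, hwdef]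
    have hOdd : ¬ Even (2*s+1) := by simp [Nat.even_add_one, even_two_mul]
    have hodd : R (2*s+1) = ∑ i, (v + g i - δ * c i) *
        (w i * Real.exp (-(η*(g i + δ * c i))) / ∑ j, w j * Real.exp (-(η*(g j + δ * c j)))) := by
      rw [hreward]
      refine Finset.sum_congr rfl fun i _ => ?_
      congr 1
      · rw [hval, if_neg hOdd]
        simp only [hgdef]; ring
      · simp only [discPlay, hLo]
        have hnum : ∀ i : Fin m, Real.exp (-(η * (((2*s:ℕ):ℝ) * u i + (u i + δ * c i))))
            = Real.exp (-(η*v)) * (w i * Real.exp (-(η*(g i + δ * c i)))) := by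
          intro i
          have hsplit : -(η * (((2*s:ℕ):ℝ) * u i + (u i + δ * c i)))
              = -(η*v) + (-(η * (((2*s:ℕ):ℝ) * u i)) + -(η*(g i + δ * c i))) := by
            simp only [hgdef]; ring
          rw [hsplit, Real.exp_add, Real.exp_add, hwdef]
        simp only [hnum]
        rw [← Finset.mul_sum, mul_div_mul_left _ _ (Real.exp_ne_zero _)]
    rw [heven, hodd, hCdef]
    exact aux_core η δ Cm Gm v Δ g c w i₁ i₂ hne hη0 hη1.le hδ0 hδ1 hg0 hgG hcC
      hg1 hg2 hΔ hw0 hwmax1 hwmax2 hδsmall'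
  have total : ∀ N : ℕ, (N:ℝ)*(2*v + 2*C*η) ≤ ∑ t ∈ Finset.range (2*N), R t := by
    intro N
    induction N with
    | zero => simp
    | succ N ih =>
      have hr : 2*(N+1) = 2*N + 1 + 1 := by ring
      rw [hr, Finset.sum_range_succ, Finset.sum_range_succ]
      have hp := pair N
      push_cast
      push_cast at ih
      nlinarith [hp, ih]
  refine ⟨xs, hsimplex, ?_⟩
  have hR : Rdisc η A (2*h) xs = ∑ t ∈ Finset.range (2*h), R t := rfl
  rw [hR, ← hv]
  have ht := total h
  calc ((2*h : ℕ):ℝ) * v + C*η*((2*h : ℕ):ℝ) = (h:ℝ)*(2*v + 2*C*η) := by push_cast; ring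
    _ ≤ ∑ t ∈ Finset.range (2*h), R t := ht
end

section
/- Let G = (V, E) be a finite directed graph with no self-loops, V = {1, …, n}, n ≥ 2, and construct from G the optimizer/learner game (A, B) with Best Response learner and horizon T = n+1 as specified. If there exists a sequence of n+1 pure optimizer actions (edges) x(0), …, x(n) whose total reward against the Best Response learner is at least n+1, then G contains a Hamiltonian cycle; moreover, the first n actions x(0), …, x(n−1) are the edges, in order, of a Hamiltonian cycle starting and ending at vertex 1. -/
/-- The learner's actions: `toLex (Sum.inl j)` is `b_{j+1}` and `toLex (Sum.inr j)` is
`b'_{j+1}`; the lexicographic order puts `b_1, …, b_n` before `b'_1, …, b'_n`, matching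
the tie-breaking order of the Best Response learner. -/
abbrev LAct (n : ℕ) := Fin n ⊕ₗ Fin n

instance (n : ℕ) : Fintype (LAct n) := inferInstanceAs (Fintype (Fin n ⊕ Fin n))

open scoped Classical in
/-- The Best Response learner's choice given cumulative utilities `h`: the action
maximizing `h`, ties broken in favor of the earliest action in the order
`(b_1, …, b_n, b'_1, …, b'_n)`. -/
noncomputable def brPlay {n : ℕ} (hn : 0 < n) (h : LAct n → ℝ) : LAct n :=
  (Finset.univ.filter fun b => ∀ b', h b' ≤ h b).min' (by
    obtain ⟨b, -, hb⟩ := Finset.exists_max_image (Finset.univ : Finset (LAct n)) h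
      ⟨toLex (Sum.inl ⟨0, hn⟩), Finset.mem_univ _⟩
    exact ⟨b, Finset.mem_filter.mpr ⟨Finset.mem_univ _, fun b' => hb b' (Finset.mem_univ _)⟩⟩)

/-- The optimizer's utility matrix of the game built from a directed graph with
vertices `Fin n` and edges `Fin m` (with source map `src`): `A[e, b_j] = 1` iff `e` is
outgoing from `j`, and `A[e, b'_j] = 0`. -/
noncomputable def Amat {n m : ℕ} (src : Fin m → Fin n) (e : Fin m) (b : LAct n) : ℝ :=
  Sum.elim (fun j => if src e = j then 1 else 0) (fun _ => 0) (ofLex b)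

/-- The learner's utility matrix of the game built from a directed graph (with source
map `src` and target map `tgt`; vertex `1` of the paper is index `0`):
`B[e, b_j] = −0.1` if `j = 1` and `e` is outgoing from `1`, `−4` if `j ≠ 1` and `e` is
outgoing from `j`, `1` if `e` is incoming to `j`, `0` otherwise; `B[e, b'_j] = 0.85`
iff `e` is outgoing from `j`. (An edge is never both outgoing from and incoming to the
same vertex since the graph has no self-loops.) -/
noncomputable def Bmat {n m : ℕ} (src tgt : Fin m → Fin n) (e : Fin m) (b : LAct n) : ℝ :=
  Sum.elim
    (fun j => (if src e = j then (if (j : ℕ) = 0 then -0.1 else -4) else 0) +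
      (if tgt e = j then 1 else 0))
    (fun j => if src e = j then 0.85 else 0) (ofLex b)

/-- The learner's cumulative utility vector after the optimizer's pure plays
`x 0, …, x (t−1)`. -/
noncomputable def histOf {n m : ℕ} (src tgt : Fin m → Fin n) (x : ℕ → Fin m) (t : ℕ)
    (b : LAct n) : ℝ :=
  ∑ s ∈ Finset.range t, Bmat src tgt (x s) b

/-- The Best Response learner's play at round `t` against the optimizer's pure
sequence `x`. -/
noncomputable def learnerPlay {n m : ℕ} (hn : 0 < n) (src tgt : Fin m → Fin n)
    (x : ℕ → Fin m) (t : ℕ) : LAct n :=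
  brPlay hn (histOf src tgt x t)

/-- The optimizer's total reward over `T` rounds against the Best Response learner. -/
noncomputable def totalReward {n m : ℕ} (hn : 0 < n) (src tgt : Fin m → Fin n)
    (x : ℕ → Fin m) (T : ℕ) : ℝ :=
  ∑ t ∈ Finset.range T, Amat src (x t) (learnerPlay hn src tgt x t)

/- ### auxiliary lemmas -/

lemma brPlay_le {n : ℕ} (hn : 0 < n) (h : LAct n → ℝ) (b : LAct n) :
    h b ≤ h (brPlay hn h) := by
  classical
  have hmem := Finset.min'_mem _ (by
    obtain ⟨c, -, hc⟩ := Finset.exists_max_image (Finset.univ : Finset (LAct n)) h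
      ⟨toLex (Sum.inl ⟨0, hn⟩), Finset.mem_univ _⟩
    exact ⟨c, Finset.mem_filter.mpr ⟨Finset.mem_univ _, fun b' => hc b' (Finset.mem_univ _)⟩⟩ :
    (Finset.univ.filter fun b => ∀ b', h b' ≤ h b).Nonempty)
  rw [Finset.mem_filter] at hmem
  exact hmem.2 b

lemma lact_bot {n : ℕ} (hn : 0 < n) (b : LAct n) : toLex (Sum.inl ⟨0, hn⟩) ≤ b := by
  rcases b with j | j
  · exact Sum.Lex.inl_le_inl_iff.mpr (by simp [Fin.le_def])
  · exact Sum.Lex.inl_le_inr _ _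

lemma brPlay_zero {n : ℕ} (hn : 0 < n) (h : LAct n → ℝ) (hz : ∀ b, h b = 0) :
    brPlay hn h = toLex (Sum.inl ⟨0, hn⟩) := by
  classical
  refine le_antisymm (Finset.min'_le _ _ ?_) (Finset.le_min' _ _ _ fun y _ => lact_bot hn y)
  exact Finset.mem_filter.mpr ⟨Finset.mem_univ _, fun b' => by rw [hz, hz]⟩

lemma amat_le_one {n m : ℕ} (src : Fin m → Fin n) (e : Fin m) (b : LAct n) :
    Amat src e b ≤ 1 := by
  rcases b with j | j
  · show (if src e = j then (1:ℝ) else 0) ≤ 1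
    split_ifs <;> norm_num
  · show (0:ℝ) ≤ 1
    norm_num

lemma amat_eq {n m : ℕ} (src : Fin m → Fin n) (e : Fin m) (b : LAct n)
    (h : (1:ℝ) ≤ Amat src e b) : b = toLex (Sum.inl (src e)) := by
  rcases b with j | j
  · change (1:ℝ) ≤ if src e = j then 1 else 0 at h
    split_ifs at h with hj
    · exact congrArg (toLex ∘ Sum.inl) hj.symm
    · norm_num at h
  · change (1:ℝ) ≤ 0 at h
    norm_num at h

lemma bmat_inl {n m : ℕ} (src tgt : Fin m → Fin n) (e : Fin m) (j : Fin n) :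
    Bmat src tgt e (toLex (Sum.inl j)) =
    (if src e = j then (if (j : ℕ) = 0 then -0.1 else -4) else 0) +
      (if tgt e = j then 1 else 0) := rfl

lemma bmat_inr {n m : ℕ} (src tgt : Fin m → Fin n) (e : Fin m) (j : Fin n) :
    Bmat src tgt e (toLex (Sum.inr j)) = if src e = j then 0.85 else 0 := rfl

lemma hist_succ {n m : ℕ} (src tgt : Fin m → Fin n) (x : ℕ → Fin m) (t : ℕ) (b : LAct n) :
    histOf src tgt x (t+1) b = histOf src tgt x t b + Bmat src tgt (x t) b :=
  Finset.sum_range_succ _ _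

open scoped Classical in
/-- The invariant: after `t` edges the play is a simple path from `z`, and the
cumulative learner utilities have the stated values. -/
def InvP {n m : ℕ} (src tgt : Fin m → Fin n) (x : ℕ → Fin m) (z : Fin n) (t : ℕ) : Prop :=
  (∀ s, s < t → tgt (x s) = src (x (s+1))) ∧
  (∀ s, s ≤ t → ∀ s', s' ≤ t → src (x s) = src (x s') → s = s') ∧
  (∀ u : Fin n, histOf src tgt x t (toLex (Sum.inl u)) =
    if u = z then -0.1 else if u = src (x t) then 1
    else if ∃ s, 0 < s ∧ s < t ∧ src (x s) = u then -3 else 0) ∧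
  (∀ u : Fin n, histOf src tgt x t (toLex (Sum.inr u)) =
    if ∃ s, s < t ∧ src (x s) = u then 0.85 else 0)

/-- if some sequence of `n+1` pure optimizer actions earns total reward
at least `n+1` over the `T = n+1` rounds against the Best Response learner, then the
graph has a Hamiltonian cycle; moreover the first `n` actions `x 0, …, x (n−1)` are,
in order, the edges of a Hamiltonian cycle starting and ending at vertex `1`
(index `0`): consecutive edges chain, the cycle starts and ends at vertex `1`, and the
`n` visited source vertices are pairwise distinct (hence every vertex is visited
exactly once). -/
theorem stmt16 {n m : ℕ} (hn : 2 ≤ n) (src tgt : Fin m → Fin n)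
    (noloop : ∀ e, src e ≠ tgt e)
    (x : ℕ → Fin m)
    (hreward : (n : ℝ) + 1 ≤ totalReward (show 0 < n by omega) src tgt x (n + 1)) :
    src (x 0) = ⟨0, by omega⟩ ∧
    (∀ t, t + 1 < n → tgt (x t) = src (x (t + 1))) ∧
    tgt (x (n - 1)) = ⟨0, by omega⟩ ∧
    (∀ s < n, ∀ t < n, src (x s) = src (x t) → s = t) := by
  classical
  have hn0 : 0 < n := by omega
  set z : Fin n := ⟨0, by omega⟩ with hzdef
  have hzval : (z : ℕ) = 0 := rfl
  -- every round gives reward 1, hence the learner plays `b_{src (x t)}` at each round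
  have hone : ∀ t, t ≤ n → learnerPlay hn0 src tgt x t = toLex (Sum.inl (src (x t))) := by
    have hsum : ∑ t ∈ Finset.range (n+1),
        (1 - Amat src (x t) (learnerPlay hn0 src tgt x t)) ≤ 0 := by
      rw [Finset.sum_sub_distrib, Finset.sum_const, Finset.card_range]
      have : totalReward hn0 src tgt x (n+1) =
          ∑ t ∈ Finset.range (n+1), Amat src (x t) (learnerPlay hn0 src tgt x t) := rfl
      rw [this] at hreward; simp only [nsmul_eq_mul, mul_one]; push_cast; linarith
    have hnn : ∀ t ∈ Finset.range (n+1),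
        (0:ℝ) ≤ 1 - Amat src (x t) (learnerPlay hn0 src tgt x t) := by
      intro t _; have := amat_le_one src (x t) (learnerPlay hn0 src tgt x t); linarith
    have hz := (Finset.sum_eq_zero_iff_of_nonneg hnn).mp
      (le_antisymm hsum (Finset.sum_nonneg hnn))
    intro t ht
    have h1 : (1:ℝ) ≤ Amat src (x t) (learnerPlay hn0 src tgt x t) := by
      have := hz t (Finset.mem_range.mpr (by omega)); linarith
    exact amat_eq _ _ _ h1
  have hmax : ∀ t, t ≤ n → ∀ b, histOf src tgt x t b ≤
      histOf src tgt x t (toLex (Sum.inl (src (x t)))) := by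
    intro t ht b
    have h1 := brPlay_le hn0 (histOf src tgt x t) b
    rwa [show brPlay hn0 (histOf src tgt x t) = learnerPlay hn0 src tgt x t from rfl,
      hone t ht] at h1
  -- round 0
  have h0 : src (x 0) = z := by
    have h1 := hone 0 (by omega)
    have h2 : learnerPlay hn0 src tgt x 0 = toLex (Sum.inl z) := by
      refine brPlay_zero hn0 _ fun b => ?_
      simp [histOf]
    rw [h1] at h2
    have := toLex.injective h2
    exact Sum.inl.injEq _ _ ▸ (by injection this)
  -- the key one-step analysis
  have stepA : ∀ t, 1 ≤ t → t + 1 ≤ n → InvP src tgt x z t →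
      (tgt (x t) = z ∧ src (x (t+1)) = z) ∨
      (tgt (x t) = src (x (t+1)) ∧ ∀ s, s ≤ t → src (x s) ≠ src (x (t+1))) := by
    intro t ht htn ⟨hch, hinj, hL, hR⟩
    have hvtz : src (x t) ≠ z := fun h => by
      have := hinj t le_rfl 0 (by omega) (h.trans h0.symm); omega
    set u := src (x (t+1)) with hu
    set w := tgt (x t) with hw
    have key := hmax (t+1) htn (toLex (Sum.inr z))
    rw [hist_succ, hist_succ, hR, hL, bmat_inr, bmat_inl] at key
    rw [if_pos ⟨0, by omega, h0⟩, if_neg hvtz] at key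
    have hwvt : w ≠ src (x t) := fun h => noloop (x t) h.symm
    by_cases hu0 : u = z
    · rw [if_pos hu0, if_neg (fun h : src (x t) = u => hvtz (h.trans hu0))] at key
      left
      refine ⟨?_, hu0⟩
      by_contra hwz
      rw [if_neg (fun h : w = u => hwz (h.trans hu0))] at key
      norm_num at key
    · rw [if_neg hu0] at key
      by_cases hut : u = src (x t)
      · rw [if_pos hut.symm, if_pos hut,
          if_neg (show (u:ℕ) ≠ 0 from fun h => hu0 (Fin.ext (h.trans hzval.symm))),
          if_neg (fun h : w = u => hwvt (h.trans hut))] at key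
        norm_num at key
      · rw [if_neg hut, if_neg (fun h : src (x t) = u => hut h.symm)] at key
        by_cases hint : ∃ s, 0 < s ∧ s < t ∧ src (x s) = u
        · rw [if_pos hint] at key
          split_ifs at key <;> norm_num at key
        · rw [if_neg hint] at key
          right
          have hwu : w = u := by
            by_contra hwu
            rw [if_neg hwu] at key; norm_num at key
          refine ⟨hwu, fun s hs hsu => ?_⟩
          rcases Nat.eq_or_lt_of_le hs with rfl | hs'
          · exact hut hsu.symm
          · rcases Nat.eq_zero_or_pos s with rfl | hs0
            · exact hu0 (hsu.symm.trans h0)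
            · exact hint ⟨s, hs0, hs', hsu⟩
  -- bad case: early return to z is impossible
  have stepB : ∀ t, 1 ≤ t → t + 2 ≤ n → InvP src tgt x z t →
      tgt (x t) = z → src (x (t+1)) = z → False := by
    intro t ht htn ⟨hch, hinj, hL, hR⟩ hwz hvz
    have hvtz : src (x t) ≠ z := fun h => by
      have := hinj t le_rfl 0 (by omega) (h.trans h0.symm); omega
    set u := src (x (t+2)) with hu
    have hw' : tgt (x (t+1)) ≠ z := fun h => noloop (x (t+1)) (hvz.trans h.symm)
    have key := hmax (t+2) htn (toLex (Sum.inr z))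
    rw [show t + 2 = (t+1)+1 from rfl, hist_succ, hist_succ, hist_succ, hist_succ,
      hR, hL, bmat_inr, bmat_inr, bmat_inl, bmat_inl] at key
    rw [if_pos ⟨0, by omega, h0⟩, if_neg hvtz, if_pos hvz, hwz, hvz] at key
    -- now bound the right side by 1 < 1.7
    by_cases hu0 : u = z
    · rw [if_pos hu0, if_neg (fun h : src (x t) = u => hvtz (h.trans hu0)),
        if_pos hu0.symm, if_pos hu0.symm, if_pos (show (u:ℕ) = 0 by rw [hu0]),
        if_neg (fun h : tgt (x (t+1)) = u => hw' (h.trans hu0))] at key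
      norm_num at key
    · rw [if_neg hu0, if_neg (fun h : z = u => hu0 h.symm),
        if_neg (fun h : z = u => hu0 h.symm)] at key
      by_cases hut : u = src (x t)
      · rw [if_pos hut, if_pos hut.symm,
          if_neg (show (u:ℕ) ≠ 0 from fun h => hu0 (Fin.ext (h.trans hzval.symm)))] at key
        split_ifs at key <;> norm_num at key
      · rw [if_neg hut, if_neg (fun h : src (x t) = u => hut h.symm)] at key
        split_ifs at key <;> norm_num at key
  -- the invariant holds for all 1 ≤ t ≤ n-1
  have hist_zero : ∀ b, histOf src tgt x 0 b = 0 := by intro b; simp [histOf]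
  have hist_one : ∀ b, histOf src tgt x 1 b = Bmat src tgt (x 0) b := by
    intro b; rw [show (1:ℕ) = 0 + 1 from rfl, hist_succ, hist_zero, zero_add]
  have base : InvP src tgt x z 1 := by
    have hwz : tgt (x 0) ≠ z := fun h => noloop (x 0) (h0.trans h.symm)
    have key := hmax 1 (by omega) (toLex (Sum.inr z))
    rw [hist_one, hist_one, bmat_inr, bmat_inl, if_pos h0] at key
    have hu0 : src (x 1) ≠ z := by
      intro h
      rw [h, if_pos h0, if_pos (show (z:ℕ) = 0 from rfl),
        if_neg (fun hh : tgt (x 0) = z => hwz hh)] at key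
      norm_num at key
    have hch1 : tgt (x 0) = src (x 1) := by
      by_contra hne
      rw [if_neg (fun h : src (x 0) = src (x 1) => hu0 (h.symm.trans h0)),
        if_neg hne] at key
      norm_num at key
    refine ⟨fun s hs => ?_, ?_, ?_, ?_⟩
    · have hs0 : s = 0 := by omega
      subst hs0; exact hch1
    · intro s hs s' hs' hss
      interval_cases s <;> interval_cases s'
      · rfl
      · exact absurd (h0.symm.trans hss).symm hu0
      · exact absurd (h0.symm.trans hss.symm).symm hu0
      · rfl
    · intro u'
      rw [hist_one, bmat_inl]
      by_cases h1 : u' = z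
      · rw [if_pos (h1 ▸ h0), if_pos (show (u':ℕ) = 0 by rw [h1]),
          if_neg (fun h : tgt (x 0) = u' => hwz (h.trans h1)), if_pos h1]
        norm_num
      · rw [if_neg (fun h : src (x 0) = u' => h1 (h.symm.trans h0)), if_neg h1, zero_add]
        by_cases h2 : u' = src (x 1)
        · rw [if_pos (hch1.trans h2.symm), if_pos h2]
        · rw [if_neg (fun h : tgt (x 0) = u' => h2 (h.symm.trans hch1)), if_neg h2,
            if_neg (by rintro ⟨s, hs1, hs2, -⟩; omega)]
    · intro u'
      rw [hist_one, bmat_inr]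
      by_cases h1 : src (x 0) = u'
      · rw [if_pos h1, if_pos ⟨0, by omega, h1⟩]
      · rw [if_neg h1, if_neg (by rintro ⟨s, hs1, hs2⟩; interval_cases s; exact h1 hs2)]
  have step : ∀ t, 1 ≤ t → t + 1 ≤ n - 1 → InvP src tgt x z t → InvP src tgt x z (t+1) := by
    intro t ht htn hI
    obtain ⟨hch, hinj, hL, hR⟩ := hI
    rcases stepA t ht (by omega) ⟨hch, hinj, hL, hR⟩ with ⟨hwz, hvz⟩ | ⟨hwu, hfresh⟩
    · exact (stepB t ht (by omega) ⟨hch, hinj, hL, hR⟩ hwz hvz).elim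
    · have hvtz : src (x t) ≠ z := fun h => by
        have := hinj t le_rfl 0 (by omega) (h.trans h0.symm); omega
      have hv1z : src (x (t+1)) ≠ z := fun h => hfresh 0 (by omega) (h0.trans h.symm)
      have hv1t : src (x (t+1)) ≠ src (x t) := fun h => hfresh t le_rfl h.symm
      refine ⟨?_, ?_, ?_, ?_⟩
      · intro s hs
        rcases Nat.lt_succ_iff_lt_or_eq.mp hs with hs' | rfl
        · exact hch s hs'
        · exact hwu
      · intro s hs s' hs' hss
        by_cases h1 : s ≤ t <;> by_cases h2 : s' ≤ t
        · exact hinj s h1 s' h2 hss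
        · have : s' = t + 1 := by omega
          exact absurd (this ▸ hss) (hfresh s h1)
        · have : s = t + 1 := by omega
          exact absurd (this ▸ hss).symm (hfresh s' h2)
        · omega
      · intro u'
        rw [hist_succ, hL, bmat_inl, hwu]
        by_cases h1 : u' = z
        · rw [if_pos h1, if_neg (fun h : src (x t) = u' => hvtz (h.trans h1)),
            if_neg (fun h : src (x (t+1)) = u' => hv1z (h.trans h1)), if_pos h1]
          norm_num
        · by_cases h2 : u' = src (x (t+1))
          · rw [if_neg h1, if_neg (fun h : u' = src (x t) => hv1t (h2.symm.trans h)),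
              if_neg (fun hh : (∃ s, 0 < s ∧ s < t ∧ src (x s) = u') =>
                by obtain ⟨s, hs1, hs2, hs3⟩ := hh
                   exact hfresh s (by omega) (hs3.trans h2)),
              if_neg (fun h : src (x t) = u' => hv1t (h2.symm.trans h.symm)),
              if_pos h2.symm, if_neg h1, if_pos h2]
            norm_num
          · by_cases h3 : u' = src (x t)
            · rw [if_neg h1, if_pos h3, if_pos h3.symm,
                if_neg (show ¬ (u':ℕ) = 0 from fun h => h1 (Fin.ext h)),
                if_neg (fun h : src (x (t+1)) = u' => h2 h.symm), if_neg h1, if_neg h2,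
                if_pos ⟨t, by omega, by omega, h3.symm⟩]
              norm_num
            · rw [if_neg h1, if_neg h3, if_neg (fun h : src (x t) = u' => h3 h.symm),
                if_neg (fun h : src (x (t+1)) = u' => h2 h.symm), if_neg h1, if_neg h2,
                add_zero, add_zero]
              by_cases h4 : ∃ s, 0 < s ∧ s < t ∧ src (x s) = u'
              · obtain ⟨s, hs1, hs2, hs3⟩ := h4
                rw [if_pos ⟨s, hs1, by omega, hs3⟩, if_pos ⟨s, hs1, by omega, hs3⟩]
              · rw [if_neg h4, if_neg (by
                  rintro ⟨s, hs1, hs2, hs3⟩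
                  rcases Nat.lt_succ_iff_lt_or_eq.mp hs2 with hs' | rfl
                  · exact h4 ⟨s, hs1, hs', hs3⟩
                  · exact h3 hs3.symm)]
      · intro u'
        rw [hist_succ, hR, bmat_inr]
        by_cases h1 : src (x t) = u'
        · rw [if_pos h1, if_neg (by
            rintro ⟨s, hs1, hs2⟩
            have := hinj s (by omega) t le_rfl (hs2.trans h1.symm); omega),
            if_pos ⟨t, by omega, h1⟩]
          norm_num
        · rw [if_neg h1, add_zero]
          by_cases h5 : ∃ s, s < t ∧ src (x s) = u'
          · obtain ⟨s, hs1, hs2⟩ := h5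
            rw [if_pos ⟨s, hs1, hs2⟩, if_pos ⟨s, by omega, hs2⟩]
          · rw [if_neg h5, if_neg (by
              rintro ⟨s, hs1, hs2⟩
              rcases Nat.lt_succ_iff_lt_or_eq.mp hs1 with hs' | rfl
              · exact h5 ⟨s, hs', hs2⟩
              · exact h1 hs2)]
  have hInv : ∀ t, 1 ≤ t → t ≤ n - 1 → InvP src tgt x z t := by
    intro t
    induction t with
    | zero => omega
    | succ k ih =>
      intro _ hk
      rcases Nat.eq_zero_or_pos k with rfl | hk0
      · exact base
      · exact step k hk0 hk (ih hk0 (by omega))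
  -- conclusion
  obtain ⟨hch, hinj, hL, hR⟩ := hInv (n-1) (by omega) le_rfl
  have hfin : tgt (x (n-1)) = z := by
    have h1 : n - 1 + 1 = n := by omega
    rcases stepA (n-1) (by omega) (by omega) ⟨hch, hinj, hL, hR⟩ with ⟨h2, -⟩ | ⟨-, hfresh⟩
    · exact h2
    · exfalso
      have hinj' : Function.Injective (fun i : Fin n => src (x i)) := by
        intro a b hab
        exact Fin.ext (hinj a (by omega) b (by omega) hab)
      obtain ⟨i, hi⟩ := (Finite.injective_iff_surjective.mp hinj') (src (x (n-1+1)))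
      exact hfresh i (by omega) hi
  exact ⟨h0, fun t htn => hch t (by omega), hfin,
    fun s hs t htn hst => hinj s (by omega) t (by omega) hst⟩
end
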